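/- Let h : 𝒯 → 𝒜 be a homology theory that reflects isomorphisms and is full. Suppose given a morphism α : U → V in 𝒯, an object W of 𝒯, and a short exact sequence 0 → h(U) →h(α) h(V) →β̂ h(W) → 0 in 𝒜 whose first map is h(α). Then there exists a distinguished triangle U →α V →β W →γ U[1] in 𝒯 such that h(β) = β̂. -/

import Mathlib

open CategoryTheory Category Limits Pretriangulated

/-!
Complete `α` to a distinguished triangle `U ⟶ V ⟶ W' ⟶ U⟦1⟧` with maps `β'`, `γ'`. Since `h`
commutes with the shift, `h(α⟦1⟧)` is mono along with `h(α)`, so `γ' ≫ α⟦1⟧ = 0` forces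
`h(γ') = 0`, and exactness of `h` on the rotated triangle makes `h(β')` epi. Thus `h(β')` and
`β̂` are both cokernels of `h(α)`, giving an isomorphism `h(W') ≅ h(W)` compatible with them.
By fullness it is `h(f)` for some `f : W' ⟶ W`, which is an isomorphism since `h` reflects
isomorphisms; transporting the triangle along `f` gives the one sought.
-/

namespace CategoryTheory

lemma Functor.mono_map_shift_map {C A : Type*} [Category C] [Category A] [HasShift C ℤ]
    [HasShift A ℤ] (F : C ⥤ A) [F.CommShift ℤ] {X Y : C} (f : X ⟶ Y) [Mono (F.map f)] (n : ℤ) :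
    Mono (F.map (f⟦n⟧')) := by
  have : F.map (f⟦n⟧') = (F.commShiftIso n).hom.app X ≫ (F.map f)⟦n⟧' ≫
      (F.commShiftIso n).inv.app Y := by
    rw [← Functor.commShiftIso_hom_naturality_assoc, Iso.hom_inv_id_app]
    exact (comp_id _).symm
  rw [this]
  infer_instance

lemma Functor.exists_iso_map_hom_eq {C D : Type*} [Category C] [Category D] (F : C ⥤ D)
    [F.Full] [F.ReflectsIsomorphisms] {X Y : C} (e : F.obj X ≅ F.obj Y) :
    ∃ e' : X ≅ Y, F.map e'.hom = e.hom := by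
  have : IsIso (F.map (F.preimage e.hom)) := by rw [F.map_preimage]; infer_instance
  have := isIso_of_reflects_iso (F.preimage e.hom) F
  exact ⟨asIso (F.preimage e.hom), F.map_preimage e.hom⟩

lemma ShortComplex.Exact.exists_iso_comp_eq {C : Type*} [Category C] [Preadditive C]
    [Balanced C] {S : ShortComplex C} (hS : S.Exact) [Epi S.g] {Z : C} {g : S.X₂ ⟶ Z}
    {w : S.f ≫ g = 0} (hg : (ShortComplex.mk S.f g w).Exact) [Epi g] :
    ∃ e : S.X₃ ≅ Z, S.g ≫ e.hom = g :=
  ⟨IsColimit.coconePointUniqueUpToIso hS.gIsCokernel hg.gIsCokernel,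
    IsColimit.comp_coconePointUniqueUpToIso_hom hS.gIsCokernel hg.gIsCokernel
      WalkingParallelPair.one⟩

variable {C : Type*} [Category C] [HasZeroObject C] [HasShift C ℤ] [Preadditive C]
  [∀ n : ℤ, (shiftFunctor C n).Additive] [Pretriangulated C]

lemma Pretriangulated.distinguished_of_iso₃ {X Y Z Z' : C} {f : X ⟶ Y} {g : Y ⟶ Z}
    {h : Z ⟶ X⟦(1 : ℤ)⟧} (hT : Triangle.mk f g h ∈ distTriang C) (e : Z ≅ Z') :
    Triangle.mk f (g ≫ e.hom) (e.inv ≫ h) ∈ distTriang C :=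
  isomorphic_distinguished _ hT _ <|
    Triangle.isoMk _ _ (Iso.refl _) (Iso.refl _) e.symm (by simp [Triangle.mk])
      (by simp [Triangle.mk]) (by simp [Triangle.mk])

lemma Functor.map_mor₃_eq_zero_of_mono {A : Type*} [Category A] [HasZeroMorphisms A]
    [HasShift A ℤ] (F : C ⥤ A) [F.PreservesZeroMorphisms] [F.CommShift ℤ] {T : Triangle C}
    (hT : T ∈ distTriang C) (h₁ : Mono (F.map T.mor₁)) : F.map T.mor₃ = 0 := by
  have := F.mono_map_shift_map T.mor₁ 1
  rw [← cancel_mono (F.map (T.mor₁⟦(1 : ℤ)⟧')), ← F.map_comp, comp_distTriang_mor_zero₃₁ _ hT,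
    F.map_zero, zero_comp]

lemma Functor.epi_map_mor₂_of_mono {A : Type*} [Category A] [Abelian A] [HasShift A ℤ]
    (F : C ⥤ A) [F.CommShift ℤ] [F.IsHomological] {T : Triangle C} (hT : T ∈ distTriang C)
    (h₁ : Mono (F.map T.mor₁)) : Epi (F.map T.mor₂) :=
  (F.map_distinguished_exact _ (rot_of_distTriang _ hT)).epi_f (F.map_mor₃_eq_zero_of_mono hT h₁)

end CategoryTheory

/-- Let `h` be a homology theory that reflects isomorphisms and is full.
Given `α : U ⟶ V`, an object `W`, and a short exact sequence
`0 ⟶ h(U) ⟶h(α) h(V) ⟶β̂ h(W) ⟶ 0` in `𝒜` whose first map is `h(α)`, there is a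
distinguished triangle `U ⟶α V ⟶β W ⟶γ U⟦1⟧` with `h(β) = β̂`. -/
theorem realization_lemma
    {T : Type*} [Category T] [HasZeroObject T] [Preadditive T] [HasShift T ℤ]
    [∀ n : ℤ, (shiftFunctor T n).Additive] [Pretriangulated T]
    {A : Type*} [Category A] [Abelian A] [HasShift A ℤ]
    [∀ n : ℤ, (shiftFunctor A n).Additive]
    (h : T ⥤ A) [h.Additive] [h.CommShift ℤ] [h.IsHomological]
    [h.ReflectsIsomorphisms] [h.Full]
    {U V : T} (α : U ⟶ V) (W : T) (βhat : h.obj V ⟶ h.obj W)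
    (w : h.map α ≫ βhat = 0)
    (hS : (ShortComplex.mk (h.map α) βhat w).ShortExact) :
    ∃ (β : V ⟶ W) (γ : W ⟶ U⟦(1:ℤ)⟧),
      (Triangle.mk α β γ ∈ distTriang T) ∧ h.map β = βhat := by
  obtain ⟨W', β', γ', hT'⟩ := distinguished_cocone_triangle α
  have := hS.epi_g
  have : Epi (h.map β') := h.epi_map_mor₂_of_mono hT' hS.mono_f
  obtain ⟨e, he⟩ := hS.exact.exists_iso_comp_eq (g := h.map β') (h.map_distinguished_exact _ hT')
  obtain ⟨e', he'⟩ := h.exists_iso_map_hom_eq e.symm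
  refine ⟨β' ≫ e'.hom, e'.inv ≫ γ', distinguished_of_iso₃ hT' e', ?_⟩
  simp [he', ← he]
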